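/- arXiv:2211.16407 — 3 statements merged into one kernel-verified Lean document; each statement's English description precedes it below -/
import Mathlib

section
/- Let Λ be a P-graph over a WQLO group (G,P), ordered by α ≤ β iff β ∈ αΛ. For a finite subset S ⊆ Λ whose degrees d(S) have an upper bound, the set of minimal common extensions ⋁S equals { μ ∈ ⋂_{γ∈S} γΛ : d(μ) = ⋁ d(S) }, where ⋁ d(S) is the least upper bound of d(S) in P. -/
/-- A `P`-graph: a countable (small) category `Λ` together with a degree functor
`d : Λ → P` satisfying the unique factorization property.  Morphisms form the type
`El`; objects are identified with identity morphisms via the range map `rng`. -/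
structure PGraph (P : Type*) [Monoid P] where
  El : Type*
  countable : Countable El
  src : El → El
  rng : El → El
  comp : (α β : El) → src α = rng β → El
  d : El → P
  src_rng : ∀ α, src (rng α) = rng α
  rng_rng : ∀ α, rng (rng α) = rng α
  src_src : ∀ α, src (src α) = src α
  rng_src : ∀ α, rng (src α) = src α
  rng_comp : ∀ α β h, rng (comp α β h) = rng α
  src_comp : ∀ α β h, src (comp α β h) = src β
  id_comp : ∀ β, comp (rng β) β (src_rng β) = β
  comp_id : ∀ α, comp α (src α) (rng_src α).symm = α
  comp_assoc : ∀ α β γ (h₁ : src α = rng β) (h₂ : src β = rng γ),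
      comp (comp α β h₁) γ ((src_comp α β h₁).trans h₂) =
      comp α (comp β γ h₂) (h₁.trans (rng_comp β γ h₂).symm)
  d_id : ∀ α, d (rng α) = 1
  d_comp : ∀ α β h, d (comp α β h) = d α * d β
  factor : ∀ α p q, d α = p * q →
      ∃! βγ : El × El, ∃ h : src βγ.1 = rng βγ.2,
        comp βγ.1 βγ.2 h = α ∧ d βγ.1 = p ∧ d βγ.2 = q

namespace PGraph

variable {P : Type*} [Monoid P] (Λ : PGraph P)

/-- `αΛ`, the set of extensions of `α` (elements of which `α` is a prefix). -/
def ext (α : Λ.El) : Set Λ.El := {β | ∃ γ h, Λ.comp α γ h = β}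

/-- `μ` is a minimal common extension of the set `S`. -/
def IsMCE (S : Set Λ.El) (μ : Λ.El) : Prop :=
  (∀ γ ∈ S, μ ∈ Λ.ext γ) ∧ ∀ ν, (∀ γ ∈ S, ν ∈ Λ.ext γ) → μ ∈ Λ.ext ν → ν = μ

/-- `v` is a vertex (identity morphism) of `Λ`. -/
def IsVertex (v : Λ.El) : Prop := Λ.rng v = v

end PGraph

namespace PGraph

variable {P : Type*} [Monoid P]

lemma d_src' (Λ : PGraph P) (α : Λ.El) : Λ.d (Λ.src α) = 1 := by
  rw [← Λ.rng_src α]; exact Λ.d_id _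

lemma comp_eq_of_d_one (Λ : PGraph P) {ν γ μ : Λ.El} (h : Λ.src ν = Λ.rng γ)
    (hc : Λ.comp ν γ h = μ) (hd : Λ.d γ = 1) : ν = μ := by
  have hdμ : Λ.d μ = Λ.d ν * 1 := by rw [← hc, Λ.d_comp, hd]
  obtain ⟨βγ, hβγ, huniq⟩ := Λ.factor μ (Λ.d ν) 1 hdμ
  have h1 := huniq (ν, γ) ⟨h, hc, rfl, hd⟩
  have h2 := huniq (μ, Λ.src μ)
    ⟨(Λ.rng_src μ).symm, Λ.comp_id μ, hdμ.trans (mul_one _), Λ.d_src' μ⟩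
  exact congrArg Prod.fst (h1.trans h2.symm)

end PGraph


/-- Let `Λ` be a `P`-graph over a WQLO group `(G,P)`.  If `S ⊆ Λ` is a
finite subset whose set of degrees has a least upper bound `p₀` in `P` (for the order
`p ≤ q ↔ ∃ r, q = p * r`), then the set `⋁S` of minimal common extensions of `S`
equals `{ μ ∈ ⋂_{γ ∈ S} γΛ : d(μ) = p₀ }`. -/
theorem pgraph_mce_eq_degree_lub {G : Type*} [Group G] (P : Submonoid G)
    (hP : ∀ a : G, a ∈ P → a⁻¹ ∈ P → a = 1)
    (Λ : PGraph ↥P) (S : Finset Λ.El) (p₀ : ↥P)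
    (h_ub : ∀ γ ∈ S, ∃ r : ↥P, p₀ = Λ.d γ * r)
    (h_least : ∀ q : ↥P, (∀ γ ∈ S, ∃ r : ↥P, q = Λ.d γ * r) → ∃ r : ↥P, q = p₀ * r) :
    {μ : Λ.El | Λ.IsMCE ↑S μ} =
      {μ : Λ.El | (∀ γ ∈ S, μ ∈ Λ.ext γ) ∧ Λ.d μ = p₀} := by
  ext μ
  simp only [Set.mem_setOf_eq, PGraph.IsMCE, Finset.mem_coe]
  constructor
  · rintro ⟨hce, hmin⟩
    refine ⟨hce, ?_⟩
    have hub : ∀ γ ∈ S, ∃ r : ↥P, Λ.d μ = Λ.d γ * r := by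
      intro γ hγ
      obtain ⟨δ, h, hc⟩ := hce γ hγ
      exact ⟨Λ.d δ, by rw [← hc, Λ.d_comp]⟩
    obtain ⟨r, hr⟩ := h_least _ hub
    obtain ⟨⟨ν, γ⟩, ⟨h, hc, hdν, hdγ⟩, huniq⟩ := Λ.factor μ p₀ r hr
    have hνce : ∀ γ' ∈ S, ν ∈ Λ.ext γ' := by
      intro γ' hγ'
      obtain ⟨δ, hδ, hcδ⟩ := hce γ' hγ'
      obtain ⟨s, hs⟩ := h_ub γ' hγ'
      obtain ⟨⟨β, ε⟩, ⟨hβε, hcβε, hdβ, hdε⟩, _⟩ := Λ.factor ν (Λ.d γ') s (hdν.trans hs)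
      subst hcβε
      have h₂ : Λ.src ε = Λ.rng γ := by rw [← Λ.src_comp β ε hβε]; exact h
      have hμassoc : Λ.comp β (Λ.comp ε γ h₂) (hβε.trans (Λ.rng_comp ε γ h₂).symm) = μ := by
        rw [← Λ.comp_assoc β ε γ hβε h₂]; exact hc
      have hdμδ : Λ.d μ = Λ.d γ' * Λ.d δ := by rw [← hcδ, Λ.d_comp]
      obtain ⟨bg, _, huniq2⟩ := Λ.factor μ (Λ.d γ') (Λ.d δ) hdμδ
      have e1 := huniq2 (γ', δ) ⟨hδ, hcδ, rfl, rfl⟩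
      have hδd : Λ.d (Λ.comp ε γ h₂) = Λ.d δ := by
        have hh : Λ.d γ' * (s * r) = Λ.d γ' * Λ.d δ := by
          rw [← mul_assoc, ← hs, ← hr, hdμδ]
        have hh2 : (s : G) * r = Λ.d δ := by
          have := congrArg (Subtype.val) hh
          push_cast at this
          exact mul_left_cancel this
        rw [Λ.d_comp, hdε, hdγ]
        exact Subtype.ext hh2
      have e2 := huniq2 (β, Λ.comp ε γ h₂)
        ⟨hβε.trans (Λ.rng_comp ε γ h₂).symm, hμassoc, hdβ, hδd⟩
      have hβγ' : β = γ' := congrArg Prod.fst (e2.trans e1.symm)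
      subst hβγ'
      exact ⟨ε, hβε, rfl⟩
    have hνμ : ν = μ := hmin ν hνce ⟨γ, h, hc⟩
    rw [← hνμ]; exact hdν
  · rintro ⟨hce, hdμ⟩
    refine ⟨hce, ?_⟩
    intro ν hν hext
    obtain ⟨γ, h, hc⟩ := hext
    have hub : ∀ γ' ∈ S, ∃ r : ↥P, Λ.d ν = Λ.d γ' * r := by
      intro γ' hγ'
      obtain ⟨δ, hδ, hcδ⟩ := hν γ' hγ'
      exact ⟨Λ.d δ, by rw [← hcδ, Λ.d_comp]⟩
    obtain ⟨r, hr⟩ := h_least _ hub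
    have key : (p₀ : G) * 1 = p₀ * (r * Λ.d γ) := by
      have : Λ.d μ = p₀ * (r * Λ.d γ) := by
        rw [← hc, Λ.d_comp, hr, mul_assoc]
      rw [mul_one]
      have h2 := congrArg Subtype.val (hdμ.symm.trans this)
      push_cast at h2
      exact h2
    have hrγ : (r : G) * Λ.d γ = 1 := (mul_left_cancel key).symm
    have hinv : ((Λ.d γ : G))⁻¹ ∈ P := by
      rw [inv_eq_of_mul_eq_one_left hrγ]; exact r.2
    have hγ1 : Λ.d γ = 1 := Subtype.ext (hP _ (Λ.d γ).2 hinv)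
    exact Λ.comp_eq_of_d_one h hc hγ1
end

section
/- Let t : Λ → B be a representation of a finitely aligned P-graph. Then C*(t), the C*-subalgebra of B generated by {t_α : α ∈ Λ}, equals the closed linear span of {t_α t_β* : α,β ∈ Λ}. -/
/-- A representation of a finitely aligned `P`-graph `Λ` in a C*-algebra `B`:
satisfies (R1) `t_α t_β = t_{αβ}`, (R2) `t_α* t_α = t_{s(α)}`, and
(R3) `t_α t_α* t_β t_β* = ∑_{γ ∈ α∨β} t_γ t_γ*`, where `mce α β` is the (finite)
set of minimal common extensions of `α` and `β`. -/
structure PGraphRep {P : Type*} [Monoid P] (Λ : PGraph P) (B : Type*)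
    [NonUnitalNormedRing B] [StarRing B] [CStarRing B] [NormedSpace ℂ B]
    [IsScalarTower ℂ B B] [SMulCommClass ℂ B B] [StarModule ℂ B] [CompleteSpace B] where
  t : Λ.El → B
  mce : Λ.El → Λ.El → Finset Λ.El
  mce_spec : ∀ α β γ, γ ∈ mce α β ↔ Λ.IsMCE {α, β} γ
  R1 : ∀ α β h, t α * t β = t (Λ.comp α β h)
  R2 : ∀ α, star (t α) * t α = t (Λ.src α)
  R3 : ∀ α β, t α * star (t α) * (t β * star (t β)) =
        ∑ γ ∈ mce α β, t γ * star (t γ)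


section aux
variable {P : Type*} [Monoid P] {Λ : PGraph P} {B : Type*}
    [NonUnitalNormedRing B] [StarRing B] [CStarRing B] [NormedSpace ℂ B]
    [IsScalarTower ℂ B B] [SMulCommClass ℂ B B] [StarModule ℂ B] [CompleteSpace B]
    (r : PGraphRep Λ B)

lemma aux_vertex_src {v : Λ.El} (hv : Λ.rng v = v) : Λ.src v = v := by
  conv_lhs => rw [← hv]
  rw [Λ.src_rng, hv]

lemma aux_star_vertex {v : Λ.El} (hv : Λ.rng v = v) : star (r.t v) = r.t v := by
  have h2 := r.R2 v
  rw [aux_vertex_src hv] at h2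
  have h3 := congrArg star h2
  rw [star_mul, star_star, h2] at h3
  exact h3.symm

lemma aux_vertex_idem {v : Λ.El} (hv : Λ.rng v = v) : r.t v * r.t v = r.t v := by
  calc r.t v * r.t v = star (r.t v) * r.t v := by rw [aux_star_vertex r hv]
    _ = r.t v := by rw [r.R2 v, aux_vertex_src hv]

lemma aux_t_mul_src (α : Λ.El) : r.t α * r.t (Λ.src α) = r.t α := by
  rw [r.R1 α (Λ.src α) (Λ.rng_src α).symm, Λ.comp_id]

lemma aux_rng_mul_t (α : Λ.El) : r.t (Λ.rng α) * r.t α = r.t α := by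
  rw [r.R1 _ _ (Λ.src_rng α), Λ.id_comp]

lemma aux_src_mul_star (α : Λ.El) : r.t (Λ.src α) * star (r.t α) = star (r.t α) := by
  have h := congrArg star (aux_t_mul_src r α)
  rwa [star_mul, aux_star_vertex r (Λ.rng_src α)] at h

lemma aux_vertex_orth {v w : Λ.El} (hv : Λ.rng v = v) (hw : Λ.rng w = w) (hne : v ≠ w) :
    r.t v * r.t w = 0 := by
  have hmce : r.mce v w = ∅ := by
    ext γ
    simp only [Finset.notMem_empty, iff_false, r.mce_spec]
    rintro ⟨hext, -⟩
    have h1 := hext v (by simp)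
    have h2 := hext w (by simp)
    obtain ⟨δ, h, rfl⟩ := h1
    obtain ⟨ε, h', heq⟩ := h2
    apply hne
    have e1 : Λ.rng (Λ.comp v δ h) = v := by rw [Λ.rng_comp, hv]
    have e2 : Λ.rng (Λ.comp v δ h) = w := by rw [← heq, Λ.rng_comp, hw]
    rw [← e1, e2]
  have h3 := r.R3 v w
  rw [hmce, Finset.sum_empty, aux_star_vertex r hv, aux_star_vertex r hw,
    aux_vertex_idem r hv, aux_vertex_idem r hw] at h3
  exact h3

lemma aux_mul_eq_zero {α β : Λ.El} (h : Λ.src α ≠ Λ.rng β) : r.t α * r.t β = 0 := by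
  calc r.t α * r.t β
      = (r.t α * r.t (Λ.src α)) * (r.t (Λ.rng β) * r.t β) := by
        rw [aux_t_mul_src, aux_rng_mul_t]
    _ = r.t α * ((r.t (Λ.src α) * r.t (Λ.rng β)) * r.t β) := by simp [mul_assoc]
    _ = 0 := by
        rw [aux_vertex_orth r (Λ.rng_src α) (Λ.rng_rng β) h, zero_mul, mul_zero]

lemma aux_star_mul_ext {β δ : Λ.El} (h : Λ.src β = Λ.rng δ) :
    star (r.t β) * r.t (Λ.comp β δ h) = r.t δ := by
  rw [← r.R1 β δ h, ← mul_assoc, r.R2, h, aux_rng_mul_t]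

lemma aux_mul_mem (α β μ ν : Λ.El) :
    (r.t α * star (r.t β)) * (r.t μ * star (r.t ν)) ∈
      Submodule.span ℂ {x : B | ∃ α β : Λ.El, x = r.t α * star (r.t β)} := by
  have key : star (r.t β) * r.t μ
      = ∑ γ ∈ r.mce β μ, (star (r.t β) * r.t γ) * (star (r.t γ) * r.t μ) := by
    have e1 : star (r.t β) * r.t μ
        = star (r.t β) * (r.t β * star (r.t β) * (r.t μ * star (r.t μ))) * r.t μ := by
      simp only [mul_assoc]
      rw [r.R2 μ, aux_t_mul_src r μ, ← mul_assoc (star (r.t β)) (r.t β), r.R2 β,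
        ← mul_assoc, aux_src_mul_star r β]
    rw [e1, r.R3, Finset.mul_sum, Finset.sum_mul]
    exact Finset.sum_congr rfl fun γ _ => by simp [mul_assoc]
  have expand : (r.t α * star (r.t β)) * (r.t μ * star (r.t ν))
      = ∑ γ ∈ r.mce β μ,
          (r.t α * (star (r.t β) * r.t γ)) * ((star (r.t γ) * r.t μ) * star (r.t ν)) := by
    calc (r.t α * star (r.t β)) * (r.t μ * star (r.t ν))
        = r.t α * ((star (r.t β) * r.t μ) * star (r.t ν)) := by simp [mul_assoc]
      _ = r.t α * ((∑ γ ∈ r.mce β μ,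
            (star (r.t β) * r.t γ) * (star (r.t γ) * r.t μ)) * star (r.t ν)) := by rw [key]
      _ = ∑ γ ∈ r.mce β μ,
            (r.t α * (star (r.t β) * r.t γ)) * ((star (r.t γ) * r.t μ) * star (r.t ν)) := by
          rw [Finset.sum_mul, Finset.mul_sum]
          exact Finset.sum_congr rfl fun γ _ => by simp [mul_assoc]
  rw [expand]
  refine Submodule.sum_mem _ fun γ hγ => ?_
  obtain ⟨hext, -⟩ := (r.mce_spec β μ γ).1 hγ
  obtain ⟨δ, hδ, hγδ⟩ := hext β (by simp)
  obtain ⟨ε, hε, hγε⟩ := hext μ (by simp)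
  have e1 : star (r.t β) * r.t γ = r.t δ := by rw [← hγδ]; exact aux_star_mul_ext r hδ
  have e2' : star (r.t μ) * r.t γ = r.t ε := by rw [← hγε]; exact aux_star_mul_ext r hε
  have e2 := congrArg star e2'
  rw [star_mul, star_star] at e2
  rw [e1, e2, ← star_mul]
  by_cases h1 : Λ.src α = Λ.rng δ
  · by_cases h2 : Λ.src ν = Λ.rng ε
    · rw [r.R1 α δ h1, r.R1 ν ε h2]
      exact Submodule.subset_span ⟨_, _, rfl⟩
    · rw [aux_mul_eq_zero r h2]
      simp
  · rw [aux_mul_eq_zero r h1]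
    simp

end aux

/-- `C*(t)`, the C*-subalgebra of `B` generated by `{t_α : α ∈ Λ}`,
equals the closed linear span of `{t_α t_β* : α, β ∈ Λ}`. -/
theorem pgraphRep_cstar_eq_span {G : Type*} [Group G] (P : Submonoid G)
    (hP : ∀ a : G, a ∈ P → a⁻¹ ∈ P → a = 1)
    (Λ : PGraph ↥P) {B : Type*}
    [NonUnitalNormedRing B] [StarRing B] [CStarRing B] [NormedSpace ℂ B]
    [IsScalarTower ℂ B B] [SMulCommClass ℂ B B] [StarModule ℂ B] [CompleteSpace B]
    (t : PGraphRep Λ B) :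
    closure ((NonUnitalStarAlgebra.adjoin ℂ (Set.range t.t) : Set B)) =
      closure ((Submodule.span ℂ {x : B | ∃ α β : Λ.El, x = t.t α * star (t.t β)} : Set B)) := by
  set S : Set B := {x : B | ∃ α β : Λ.El, x = t.t α * star (t.t β)} with hS
  set M : Submodule ℂ B := Submodule.span ℂ S with hM
  have hmul : ∀ x ∈ M, ∀ y ∈ M, x * y ∈ M := by
    intro x hx y hy
    induction hy using Submodule.span_induction with
    | mem y hy =>
        induction hx using Submodule.span_induction with
        | mem x hx =>
            obtain ⟨a, b, rfl⟩ := hx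
            obtain ⟨c, d, rfl⟩ := hy
            exact aux_mul_mem t a b c d
        | zero => rw [zero_mul]; exact M.zero_mem
        | add x₁ x₂ _ _ h1 h2 => rw [add_mul]; exact M.add_mem h1 h2
        | smul c x _ h => rw [smul_mul_assoc]; exact M.smul_mem _ h
    | zero => rw [mul_zero]; exact M.zero_mem
    | add y₁ y₂ _ _ h1 h2 => rw [mul_add]; exact M.add_mem h1 h2
    | smul c y _ h => rw [mul_smul_comm]; exact M.smul_mem _ h
  have hstar : ∀ x ∈ M, star x ∈ M := by
    intro x hx
    induction hx using Submodule.span_induction with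
    | mem x hx =>
        obtain ⟨a, b, rfl⟩ := hx
        exact Submodule.subset_span ⟨b, a, by rw [star_mul, star_star]⟩
    | zero => rw [star_zero]; exact M.zero_mem
    | add x y _ _ hx hy => rw [star_add]; exact M.add_mem hx hy
    | smul c x _ hx => rw [star_smul]; exact M.smul_mem _ hx
  let A : NonUnitalStarSubalgebra ℂ B :=
    { carrier := M
      add_mem' := fun hx hy => M.add_mem hx hy
      zero_mem' := M.zero_mem
      mul_mem' := fun hx hy => hmul _ hx _ hy
      smul_mem' := fun c x hx => M.smul_mem c hx
      star_mem' := fun hx => hstar _ hx }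
  have hrange : Set.range t.t ⊆ S := by
    rintro x ⟨α, rfl⟩
    exact ⟨α, Λ.src α, by rw [aux_star_vertex t (Λ.rng_src α), aux_t_mul_src t α]⟩
  apply Set.Subset.antisymm
  · have hle : NonUnitalStarAlgebra.adjoin ℂ (Set.range t.t) ≤ A.topologicalClosure := by
      apply NonUnitalStarAlgebra.adjoin_le
      exact (hrange.trans Submodule.subset_span).trans subset_closure
    have : (NonUnitalStarAlgebra.adjoin ℂ (Set.range t.t) : Set B) ⊆ closure (M : Set B) := hle
    calc closure ((NonUnitalStarAlgebra.adjoin ℂ (Set.range t.t) : Set B))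
        ⊆ closure (closure (M : Set B)) := closure_mono this
      _ = closure (M : Set B) := closure_closure
  · apply closure_mono
    have hsub : M ≤ (NonUnitalStarAlgebra.adjoin ℂ
        (Set.range t.t)).toNonUnitalSubalgebra.toSubmodule := by
      refine Submodule.span_le.2 ?_
      rintro x ⟨α, β, rfl⟩
      show t.t α * star (t.t β) ∈ NonUnitalStarAlgebra.adjoin ℂ (Set.range t.t)
      exact mul_mem (NonUnitalStarAlgebra.subset_adjoin ℂ _ ⟨α, rfl⟩)
        (star_mem (NonUnitalStarAlgebra.subset_adjoin ℂ _ ⟨β, rfl⟩))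
    exact fun x hx => hsub hx
end

section
/- Let t : Λ → B be a representation of a finitely aligned P-graph, v a vertex, α ∈ Λv, E ⊆ αΛ a finite exhaustive set, and F ⊆ vΛ the unique finite exhaustive set with E = αF. Then ∏_{γ∈E}(t_α t_α* − t_γ t_γ*) = t_α (∏_{β∈F}(t_v − t_β t_β*)) t_α*. In particular, ∏_{γ∈E}(t_α t_α* − t_γ t_γ*) = 0 if and only if t_v = ⋁_{β∈F} t_β t_β* (the join of the projections t_β t_β* in B). -/
/-- `E` is exhaustive in `αΛ`. -/
def PGraph.Exhaustive {P : Type*} [Monoid P] (Λ : PGraph P) (α : Λ.El) (E : Set Λ.El) : Prop :=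
  ∀ β ∈ Λ.ext α, ∃ γ ∈ E, ∃ μ : Λ.El, μ ∈ Λ.ext β ∧ μ ∈ Λ.ext γ

/-! Range projections `t_γ t_γ*` of a representation commute by (R3), so the factors
`t_α t_α* − t_γ t_γ*` may be multiplied in any order. Writing `γ = αβ` (uniquely, by left
cancellation in the category) gives `t_α t_α* − t_{αβ} t_{αβ}* = t_α (t_v − t_β t_β*) t_α*`, and
since `t_α* t_α = t_v`, the map `x ↦ t_α x t_α*` is multiplicative on the corner `t_v B t_v`,
which contains every `t_v − t_β t_β*`; this needs `E ≠ ∅`, which exhaustiveness provides.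

For the second claim, `t_v ∏ (t_v − t_β t_β*) = t_v ∏ (1 − t_β t_β*)` and conjugation by the
partial isometry `t_α` is injective on the corner, so the product vanishes iff
`t_v ∏ (1 − t_β t_β*) = 0`; as `(1 − t_v) ∏ (1 − t_β t_β*) = 1 − t_v`, this says
`∏ (1 − t_β t_β*) = 1 − t_v`.
-/

theorem List.prod_map_mul_mul {ι M : Type*} [Monoid M] {a s e : M} (hsa : s * a = e)
    {f : ι → M} {l : List ι} (hl : l ≠ []) (hf : ∀ i ∈ l, e * f i = f i) :
    (l.map fun i => a * f i * s).prod = a * (l.map f).prod * s := by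
  induction l with
  | nil => exact absurd rfl hl
  | cons i l ih =>
    rcases l with _ | ⟨j, l⟩
    · simp
    rw [List.map_cons, List.prod_cons, ih (List.cons_ne_nil _ _) fun k hk => hf k (.tail _ hk)]
    calc a * f i * s * (a * ((j :: l).map f).prod * s)
        = a * f i * ((s * a) * f j) * (l.map f).prod * s := by
          simp only [List.map_cons, List.prod_cons, mul_assoc]
      _ = a * ((i :: j :: l).map f).prod * s := by
          rw [hsa, hf j (.tail _ (.head _))]; simp only [List.map_cons, List.prod_cons, mul_assoc]

theorem mul_mul_eq_zero_iff {S : Type*} [SemigroupWithZero S] {a s e z : S} (hsa : s * a = e)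
    (hz : e * z * e = z) : a * z * s = 0 ↔ z = 0 := by
  refine ⟨fun h => ?_, fun h => by rw [h, mul_zero, zero_mul]⟩
  calc z = e * z * e := hz.symm
    _ = s * (a * z * s) * a := by rw [← hsa]; simp only [mul_assoc]
    _ = 0 := by rw [h, mul_zero, zero_mul]

section Corner

variable {R ι : Type*} [Ring R] {e : R}

theorem mul_eq_zero_iff_eq_one_sub {y : R} (h : (1 - e) * y = 1 - e) :
    e * y = 0 ↔ e = 1 - y := by
  have hey : e * y = e - (1 - y) :=
    calc e * y = y - (1 - e) * y := by rw [sub_mul, one_mul, sub_sub_cancel]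
      _ = e - (1 - y) := by rw [h]; abel
  rw [hey, sub_eq_zero]

theorem one_sub_mul_prod_map_one_sub {q : ι → R} {l : List ι} (hq : ∀ i ∈ l, e * q i = q i) :
    (1 - e) * (l.map fun i => 1 - q i).prod = 1 - e := by
  induction l with
  | nil => simp
  | cons i l ih =>
    have hi : (1 - e) * (1 - q i) = 1 - e := by
      rw [mul_sub, mul_one, sub_mul, one_mul, hq i (.head _), sub_self, sub_zero]
    rw [List.map_cons, List.prod_cons, ← mul_assoc, hi, ih fun j hj => hq j (.tail _ hj)]

theorem IsIdempotentElem.mul_prod_map_sub (he : IsIdempotentElem e) {q : ι → R} {l : List ι}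
    (hq : ∀ i ∈ l, e * q i = q i ∧ q i * e = q i) :
    e * (l.map fun i => e - q i).prod = e * (l.map fun i => 1 - q i).prod := by
  induction l with
  | nil => simp
  | cons i l ih =>
    obtain ⟨hl, hr⟩ := hq i (.head _)
    have hleft : e * (e - q i) = e - q i := by rw [mul_sub, he.eq, hl]
    have hright : (e - q i) * e = e - q i := by rw [sub_mul, he.eq, hr]
    simp only [List.map_cons, List.prod_cons]
    calc e * ((e - q i) * (l.map fun i => e - q i).prod)
        = (e - q i) * (e * (l.map fun i => e - q i).prod) := by
          rw [← mul_assoc, hleft, ← mul_assoc, hright]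
      _ = e * ((1 - q i) * (l.map fun i => 1 - q i).prod) := by
          rw [ih fun j hj => hq j (.tail _ hj), ← mul_assoc, ← mul_assoc, hright, mul_sub,
            mul_one, hl]

theorem IsIdempotentElem.mul_prod_map_sub_mul_eq_zero_iff (he : IsIdempotentElem e) {a s : R}
    (hsa : s * a = e) (hae : a * e = a) {q : ι → R} {l : List ι}
    (hq : ∀ i ∈ l, e * q i = q i ∧ q i * e = q i) :
    a * (l.map fun i => e - q i).prod * s = 0 ↔ e = 1 - (l.map fun i => 1 - q i).prod := by
  set Y := (l.map fun i => 1 - q i).prod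
  have hY : Commute e Y :=
    Commute.list_prod_right _ _ fun x hx => by
      obtain ⟨i, hi, rfl⟩ := List.mem_map.mp hx
      exact (Commute.one_right e).sub_right ((hq i hi).1.trans (hq i hi).2.symm)
  have hcorner : e * (e * Y) * e = e * Y := by
    rw [← mul_assoc, he.eq, mul_assoc, ← hY.eq, ← mul_assoc, he.eq]
  rw [← hae, mul_assoc a, he.mul_prod_map_sub hq, mul_mul_eq_zero_iff hsa hcorner,
    mul_eq_zero_iff_eq_one_sub (one_sub_mul_prod_map_one_sub fun i hi => (hq i hi).1)]

end Corner

namespace PGraph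

variable {P : Type*} [Monoid P] (Λ : PGraph P)

theorem comp_left_cancel [IsLeftCancelMul P] {α β β' : Λ.El} {h : Λ.src α = Λ.rng β}
    {h' : Λ.src α = Λ.rng β'} (hc : Λ.comp α β h = Λ.comp α β' h') : β = β' := by
  have hd : Λ.d α * Λ.d β = Λ.d α * Λ.d β' := by
    rw [← Λ.d_comp α β h, ← Λ.d_comp α β' h', hc]
  obtain ⟨_, _, huniq⟩ := Λ.factor (Λ.comp α β h) (Λ.d α) (Λ.d β) (Λ.d_comp α β h)
  exact congrArg Prod.snd ((huniq (α, β) ⟨h, rfl, rfl, rfl⟩).trans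
    (huniq (α, β') ⟨h', hc.symm, rfl, (mul_left_cancel hd).symm⟩).symm)

theorem mem_ext_self (α : Λ.El) : α ∈ Λ.ext α :=
  ⟨Λ.src α, (Λ.rng_src α).symm, Λ.comp_id α⟩

theorem Exhaustive.nonempty {Λ : PGraph P} {α : Λ.El} {E : Set Λ.El} (hE : Λ.Exhaustive α E) :
    E.Nonempty :=
  let ⟨γ, hγ, _⟩ := hE α (Λ.mem_ext_self α)
  ⟨γ, hγ⟩

end PGraph

namespace PGraphRep

section

variable {P : Type*} [Monoid P] {Λ : PGraph P} {B : Type*}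
  [NonUnitalNormedRing B] [StarRing B] [CStarRing B] [NormedSpace ℂ B]
  [IsScalarTower ℂ B B] [SMulCommClass ℂ B B] [StarModule ℂ B] [CompleteSpace B]
  (t : PGraphRep Λ B)

theorem mce_comm (α β : Λ.El) : t.mce α β = t.mce β α := by
  ext γ
  rw [t.mce_spec, t.mce_spec, Set.pair_comm]

theorem commute_rangeProj (α β : Λ.El) :
    Commute (t.t α * star (t.t α)) (t.t β * star (t.t β)) := by
  rw [Commute, SemiconjBy, t.R3, t.R3, t.mce_comm]

theorem t_rng_mul (β : Λ.El) : t.t (Λ.rng β) * t.t β = t.t β := by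
  rw [t.R1 _ _ (Λ.src_rng β), Λ.id_comp]

theorem t_mul_t_src (α : Λ.El) : t.t α * t.t (Λ.src α) = t.t α := by
  rw [t.R1 _ _ (Λ.rng_src α).symm, Λ.comp_id]

theorem star_t_src (α : Λ.El) : star (t.t (Λ.src α)) = t.t (Λ.src α) := by
  rw [← t.R2, star_mul, star_star]

theorem isIdempotentElem_t_src (α : Λ.El) : IsIdempotentElem (t.t (Λ.src α)) := by
  have h := t.t_mul_t_src (Λ.src α)
  rwa [Λ.src_src] at h

theorem t_rng_mul_rangeProj (β : Λ.El) :
    t.t (Λ.rng β) * (t.t β * star (t.t β)) = t.t β * star (t.t β) := by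
  rw [← mul_assoc, t.t_rng_mul]

theorem rangeProj_mul_t_rng (β : Λ.El) :
    t.t β * star (t.t β) * t.t (Λ.rng β) = t.t β * star (t.t β) := by
  rw [← Λ.src_rng β, ← t.star_t_src, mul_assoc, ← star_mul, Λ.src_rng, t.t_rng_mul]

theorem sub_rangeProj_comp (α β : Λ.El) (h : Λ.src α = Λ.rng β) :
    t.t α * star (t.t α) - t.t (Λ.comp α β h) * star (t.t (Λ.comp α β h)) =
      t.t α * (t.t (Λ.src α) - t.t β * star (t.t β)) * star (t.t α) := by
  rw [← t.R1 α β h, star_mul, mul_sub, sub_mul, t.t_mul_t_src]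
  simp only [mul_assoc]

end

section

variable {P : Type*} [Monoid P] {Λ : PGraph P} {B : Type*}
  [NormedRing B] [StarRing B] [CStarRing B] [NormedAlgebra ℂ B] [StarModule ℂ B] [CompleteSpace B]
  (t : PGraphRep Λ B)

theorem prod_sub_rangeProj_eq [IsLeftCancelMul P] [DecidableEq Λ.El] {α : Λ.El}
    {E F : Finset Λ.El} (hF : ↑F ⊆ {β : Λ.El | Λ.rng β = Λ.src α})
    (hEF : (E : Set Λ.El) =
      {x : Λ.El | ∃ β ∈ F, ∃ h : Λ.src α = Λ.rng β, Λ.comp α β h = x})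
    {lE lF : List Λ.El} (hnE : lE.Nodup) (htE : lE.toFinset = E) (hnF : lF.Nodup)
    (htF : lF.toFinset = F) :
    (lE.map fun γ => t.t α * star (t.t α) - t.t γ * star (t.t γ)).prod =
      (lF.map fun β => t.t α * (t.t (Λ.src α) - t.t β * star (t.t β)) * star (t.t α)).prod := by
  have hlF : ∀ β ∈ lF, Λ.src α = Λ.rng β := fun β hβ =>
    (hF (show β ∈ F from htF ▸ List.mem_toFinset.mpr hβ)).symm
  have hperm : lE.Perm (lF.pmap (Λ.comp α) hlF) := by
    refine List.perm_of_nodup_nodup_toFinset_eq hnE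
      (hnF.pmap fun _ _ _ _ => Λ.comp_left_cancel) ?_
    ext γ
    rw [htE, ← Finset.mem_coe, hEF, List.mem_toFinset, List.mem_pmap, ← htF]
    simp only [List.mem_toFinset, Set.mem_ofPred_eq]
    exact ⟨fun ⟨β, hβ, h, hγ⟩ => ⟨β, hβ, hγ⟩, fun ⟨β, hβ, hγ⟩ => ⟨β, hβ, hlF β hβ, hγ⟩⟩
  have hcomm : ∀ γ γ' : Λ.El, Commute (t.t α * star (t.t α) - t.t γ * star (t.t γ))
      (t.t α * star (t.t α) - t.t γ' * star (t.t γ')) := fun γ γ' =>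
    ((Commute.refl _).sub_right (t.commute_rangeProj α γ')).sub_left
      ((t.commute_rangeProj γ α).sub_right (t.commute_rangeProj γ γ'))
  rw [((hperm.map _).prod_eq' (List.pairwise_map.mpr (List.pairwise_of_forall hcomm))),
    List.map_pmap, ← List.pmap_eq_map (p := fun β => Λ.src α = Λ.rng β) hlF]
  exact congrArg List.prod (List.pmap_congr_left _ fun β _ h _ => t.sub_rangeProj_comp α β h)

end

end PGraphRep

theorem pgraphRep_exhaustive_product_general {G : Type*} [Group G] (P : Submonoid G)
    (Λ : PGraph ↥P) {B : Type*}
    [NormedRing B] [StarRing B] [CStarRing B] [NormedAlgebra ℂ B]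
    [StarModule ℂ B] [CompleteSpace B]
    [DecidableEq Λ.El] (t : PGraphRep Λ B)
    (v α : Λ.El) (hα : Λ.src α = v)
    (E F : Finset Λ.El)
    (hEex : Λ.Exhaustive α ↑E)
    (hF : ↑F ⊆ {β : Λ.El | Λ.rng β = v})
    (hEF : (E : Set Λ.El) =
      {x : Λ.El | ∃ β ∈ F, ∃ h : Λ.src α = Λ.rng β, Λ.comp α β h = x}) :
    ∀ lE lF : List Λ.El, lE.Nodup → lE.toFinset = E → lF.Nodup → lF.toFinset = F →
      ((lE.map fun γ => t.t α * star (t.t α) - t.t γ * star (t.t γ)).prod =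
        t.t α * (lF.map fun β => t.t v - t.t β * star (t.t β)).prod * star (t.t α)) ∧
      ((lE.map fun γ => t.t α * star (t.t α) - t.t γ * star (t.t γ)).prod = 0 ↔
        t.t v = 1 - (lF.map fun β => 1 - t.t β * star (t.t β)).prod) := by
  intro lE lF hnE htE hnF htF
  subst hα
  have hlF : lF ≠ [] := by
    obtain ⟨γ, hγ⟩ := hEex.nonempty
    rw [hEF] at hγ
    obtain ⟨β, hβ, -⟩ := hγ
    rintro rfl
    simp [← htF] at hβ
  have hcorner : ∀ β ∈ lF, t.t (Λ.src α) * (t.t β * star (t.t β)) = t.t β * star (t.t β) ∧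
      t.t β * star (t.t β) * t.t (Λ.src α) = t.t β * star (t.t β) := fun β hβ => by
    rw [(hF (htF ▸ List.mem_toFinset.mpr hβ) : Λ.rng β = Λ.src α).symm]
    exact ⟨t.t_rng_mul_rangeProj β, t.rangeProj_mul_t_rng β⟩
  have hsa : star (t.t α) * t.t α = t.t (Λ.src α) := t.R2 α
  have hprod := (t.prod_sub_rangeProj_eq hF hEF hnE htE hnF htF).trans
    (List.prod_map_mul_mul hsa hlF fun β hβ => by
      rw [mul_sub, (t.isIdempotentElem_t_src α).eq, (hcorner β hβ).1])
  exact ⟨hprod, hprod ▸ (t.isIdempotentElem_t_src α).mul_prod_map_sub_mul_eq_zero_iff hsa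
    (t.t_mul_t_src α) hcorner⟩

/-- For a representation `t`, a vertex `v`, `α ∈ Λv`, a finite exhaustive
`E ⊆ αΛ` and the unique finite exhaustive `F ⊆ vΛ` with `E = αF`, one has
`∏_{γ∈E} (t_α t_α* − t_γ t_γ*) = t_α (∏_{β∈F} (t_v − t_β t_β*)) t_α*` (products over any
enumeration; the factors commute), and the left-hand product vanishes iff
`t_v = ⋁_{β∈F} t_β t_β* = 1 − ∏_{β∈F} (1 − t_β t_β*)`. -/
theorem pgraphRep_exhaustive_product {G : Type*} [Group G] (P : Submonoid G)
    (hP : ∀ a : G, a ∈ P → a⁻¹ ∈ P → a = 1)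
    (Λ : PGraph ↥P) {B : Type*}
    [NormedRing B] [StarRing B] [CStarRing B] [NormedAlgebra ℂ B]
    [StarModule ℂ B] [CompleteSpace B]
    [DecidableEq Λ.El] (t : PGraphRep Λ B)
    (v α : Λ.El) (hv : Λ.IsVertex v) (hα : Λ.src α = v)
    (E F : Finset Λ.El)
    (hE : ↑E ⊆ Λ.ext α) (hEex : Λ.Exhaustive α ↑E)
    (hF : ↑F ⊆ {β : Λ.El | Λ.rng β = v})
    (hEF : (E : Set Λ.El) =
      {x : Λ.El | ∃ β ∈ F, ∃ h : Λ.src α = Λ.rng β, Λ.comp α β h = x}) :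
    ∀ lE lF : List Λ.El, lE.Nodup → lE.toFinset = E → lF.Nodup → lF.toFinset = F →
      ((lE.map fun γ => t.t α * star (t.t α) - t.t γ * star (t.t γ)).prod =
        t.t α * (lF.map fun β => t.t v - t.t β * star (t.t β)).prod * star (t.t α)) ∧
      ((lE.map fun γ => t.t α * star (t.t α) - t.t γ * star (t.t γ)).prod = 0 ↔
        t.t v = 1 - (lF.map fun β => 1 - t.t β * star (t.t β)).prod) :=
  pgraphRep_exhaustive_product_general P Λ t v α hα E F hEex hF hEF
end
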